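/- arXiv:math/9911121 — 2 statements merged into one kernel-verified Lean document; each statement's English description precedes it below -/
import Mathlib

section
/- Let a ∈ ℝ, Ω ⊆ ℂ open, and F holomorphic on Ω with F′ nonvanishing and 1 + a|F|² > 0 on Ω. Then the smooth function f(x,y) = log( 4|F′(x+iy)|² / (1 + a|F(x+iy)|²)² ) satisfies the Liouville equation f_xx + f_yy + 2a·e^f = 0 on {(x,y) : x+iy ∈ Ω}. -/
/-!
Write `f = log 4 + log ‖F'‖² - 2 log (1 + a‖F‖²)`. For holomorphic `G`,
`Δ log (b + a‖G‖²) = 4ab‖G'‖² / (b + a‖G‖²)²`: with `b = 0` this is the harmonicity of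
`log ‖F'‖²`, and with `G = F`, `b = 1` it gives `Δf = -8a‖F'‖² / (1 + a‖F‖²)² = -2a eᶠ`.
The Laplacian is the sum of the second derivatives along lines of directions `1` and `i`.
Along direction `c` the second derivative of `log (b + a‖G‖²)` involves `c` only through
`‖G' c‖²`, `⟪G, G'' c²⟫` and `⟪G, G' c⟫`; the terms with `c² = ±1` cancel, and
`⟪G, G'⟫² + ⟪G, G' i⟫² = ‖G‖²‖G'‖²`.
-/

/-- Partial derivative in the first variable of a function of two real variables. -/
noncomputable def pdx2 (f : ℝ → ℝ → ℝ) : ℝ → ℝ → ℝ :=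
  fun x y => deriv (fun t => f t y) x

/-- Partial derivative in the second variable of a function of two real variables. -/
noncomputable def pdy2 (f : ℝ → ℝ → ℝ) : ℝ → ℝ → ℝ :=
  fun x y => deriv (fun t => f x t) y

open Complex Filter Topology

section SecondDeriv

variable {𝕜 : Type*} [NontriviallyNormedField 𝕜] {E : Type*} [NormedAddCommGroup E]
  [NormedSpace 𝕜 E] {g g₁ g' g₁' : 𝕜 → E} {g'' g₁'' : E} {t : 𝕜}

structure HasSecondDerivAt (g g' : 𝕜 → E) (g'' : E) (t : 𝕜) : Prop where
  eventually_hasDerivAt : ∀ᶠ s in 𝓝 t, HasDerivAt g (g' s) s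
  hasDerivAt : HasDerivAt g' g'' t

namespace HasSecondDerivAt

theorem deriv_deriv (h : HasSecondDerivAt g g' g'' t) : deriv (deriv g) t = g'' := by
  have hderiv : deriv g =ᶠ[𝓝 t] g' := h.eventually_hasDerivAt.mono fun _ hs => hs.deriv
  exact hderiv.deriv_eq.trans h.hasDerivAt.deriv

theorem congr_of_eventuallyEq (h : HasSecondDerivAt g g' g'' t) (h₁ : g₁ =ᶠ[𝓝 t] g) :
    HasSecondDerivAt g₁ g' g'' t where
  eventually_hasDerivAt := by
    filter_upwards [h.eventually_hasDerivAt, h₁.eventually_nhds] with s hs h₁s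
    exact hs.congr_of_eventuallyEq h₁s
  hasDerivAt := h.hasDerivAt

theorem sub (h : HasSecondDerivAt g g' g'' t) (h₁ : HasSecondDerivAt g₁ g₁' g₁'' t) :
    HasSecondDerivAt (fun s => g s - g₁ s) (fun s => g' s - g₁' s) (g'' - g₁'') t where
  eventually_hasDerivAt := by
    filter_upwards [h.eventually_hasDerivAt, h₁.eventually_hasDerivAt] with s hs h₁s
    exact hs.sub h₁s
  hasDerivAt := h.hasDerivAt.sub h₁.hasDerivAt

theorem const_add (c : E) (h : HasSecondDerivAt g g' g'' t) :
    HasSecondDerivAt (fun s => c + g s) g' g'' t where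
  eventually_hasDerivAt := h.eventually_hasDerivAt.mono fun _ hs => hs.const_add c
  hasDerivAt := h.hasDerivAt

end HasSecondDerivAt

theorem HasSecondDerivAt.const_mul {g g' : 𝕜 → 𝕜} {g'' : 𝕜} (c : 𝕜)
    (h : HasSecondDerivAt g g' g'' t) :
    HasSecondDerivAt (fun s => c * g s) (fun s => c * g' s) (c * g'') t where
  eventually_hasDerivAt := h.eventually_hasDerivAt.mono fun _ hs => hs.const_mul c
  hasDerivAt := h.hasDerivAt.const_mul c

end SecondDeriv

theorem HasSecondDerivAt.log {g g' : ℝ → ℝ} {g'' t : ℝ} (h : HasSecondDerivAt g g' g'' t)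
    (ht : g t ≠ 0) :
    HasSecondDerivAt (fun s => Real.log (g s)) (fun s => g' s / g s)
      ((g'' * g t - g' t ^ 2) / g t ^ 2) t where
  eventually_hasDerivAt := by
    have hg : HasDerivAt g (g' t) t := h.eventually_hasDerivAt.self_of_nhds
    filter_upwards [h.eventually_hasDerivAt, hg.continuousAt.eventually_ne ht] with s hs hs0
    simpa only [div_eq_inv_mul] using hs.log hs0
  hasDerivAt := by
    refine (h.hasDerivAt.div h.eventually_hasDerivAt.self_of_nhds ht).congr_deriv ?_
    ring

theorem hasSecondDerivAt_sq_norm {E : Type*} [NormedAddCommGroup E] [InnerProductSpace ℝ E]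
    {p q : ℝ → E} {q' : E} {t : ℝ} (hp : ∀ᶠ s in 𝓝 t, HasDerivAt p (q s) s)
    (hq : HasDerivAt q q' t) :
    HasSecondDerivAt (fun s => ‖p s‖ ^ 2) (fun s => 2 * inner ℝ (p s) (q s))
      (2 * (‖q t‖ ^ 2 + inner ℝ (p t) q')) t where
  eventually_hasDerivAt := hp.mono fun _ hs => hs.norm_sq
  hasDerivAt := by
    refine ((hp.self_of_nhds.inner ℝ hq).const_mul 2).congr_deriv ?_
    rw [real_inner_self_eq_norm_sq]
    ring

/-- The second derivative at `t` of `s ↦ log (b + a‖G (ℓ s)‖²)` for holomorphic `G` and a line `ℓ`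
of direction `c`, where `w₀, w₁, w₂` are the values of `G, G', G''` at `ℓ t`. -/
noncomputable def secondDerivLogAlongLine (a b : ℝ) (w₀ w₁ w₂ c : ℂ) : ℝ :=
  (2 * a * (‖w₁ * c‖ ^ 2 + inner ℝ w₀ (w₂ * c * c)) * (b + a * ‖w₀‖ ^ 2)
    - (2 * a * inner ℝ w₀ (w₁ * c)) ^ 2) / (b + a * ‖w₀‖ ^ 2) ^ 2

theorem inner_sq_add_inner_mul_I_sq (z w : ℂ) :
    inner ℝ z w ^ 2 + inner ℝ z (w * I) ^ 2 = ‖z‖ ^ 2 * ‖w‖ ^ 2 := by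
  simp only [Complex.inner, Complex.sq_norm, Complex.normSq_apply, mul_re, mul_im, conj_re,
    conj_im, I_re, I_im]
  ring

theorem secondDerivLogAlongLine_one_add_I (a b : ℝ) (w₀ w₁ w₂ : ℂ) :
    secondDerivLogAlongLine a b w₀ w₁ w₂ 1 + secondDerivLogAlongLine a b w₀ w₁ w₂ I
      = 4 * a * b * ‖w₁‖ ^ 2 / (b + a * ‖w₀‖ ^ 2) ^ 2 := by
  have hI : w₂ * I * I = -(w₂ * 1 * 1) := by rw [mul_assoc, I_mul_I]; ring
  simp only [secondDerivLogAlongLine, hI, inner_neg_right, norm_mul, norm_I, mul_one, ← add_div]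
  congr 1
  linear_combination (-4 * a ^ 2) * inner_sq_add_inner_mul_I_sq w₀ w₁

theorem hasSecondDerivAt_log_add_mul_sq_norm_comp {G : ℂ → ℂ} {ℓ : ℝ → ℂ} {c : ℂ} {a b t : ℝ}
    (hG : AnalyticAt ℂ G (ℓ t)) (hℓ : ∀ s, HasDerivAt ℓ c s)
    (hQ : b + a * ‖G (ℓ t)‖ ^ 2 ≠ 0) :
    HasSecondDerivAt (fun s => Real.log (b + a * ‖G (ℓ s)‖ ^ 2))
      (fun s => 2 * a * inner ℝ (G (ℓ s)) (deriv G (ℓ s) * c) / (b + a * ‖G (ℓ s)‖ ^ 2))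
      (secondDerivLogAlongLine a b (G (ℓ t)) (deriv G (ℓ t)) (deriv (deriv G) (ℓ t)) c) t := by
  have hGℓ : ∀ᶠ s in 𝓝 t, HasDerivAt (fun s => G (ℓ s)) (deriv G (ℓ s) * c) s := by
    filter_upwards [(hℓ t).continuousAt.tendsto.eventually hG.eventually_analyticAt] with s hs
    exact hs.differentiableAt.hasDerivAt.comp s (hℓ s)
  have hG'ℓ : HasDerivAt (fun s => deriv G (ℓ s) * c) (deriv (deriv G) (ℓ t) * c * c) t :=
    (hG.deriv.differentiableAt.hasDerivAt.comp t (hℓ t)).mul_const c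
  convert ((hasSecondDerivAt_sq_norm hGℓ hG'ℓ).const_mul a |>.const_add b).log hQ using 1
  · ext s
    ring
  · simp only [secondDerivLogAlongLine]
    ring

theorem deriv_deriv_log_density_comp {G H : ℂ → ℂ} {ℓ : ℝ → ℂ} {c : ℂ} {a t : ℝ}
    (hG : AnalyticAt ℂ G (ℓ t)) (hH : AnalyticAt ℂ H (ℓ t)) (hℓ : ∀ s, HasDerivAt ℓ c s)
    (hG0 : G (ℓ t) ≠ 0) (hN : 1 + a * ‖H (ℓ t)‖ ^ 2 ≠ 0) :
    deriv (deriv fun s => Real.log (4 * ‖G (ℓ s)‖ ^ 2 / (1 + a * ‖H (ℓ s)‖ ^ 2) ^ 2)) t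
      = secondDerivLogAlongLine 1 0 (G (ℓ t)) (deriv G (ℓ t)) (deriv (deriv G) (ℓ t)) c
        - 2 * secondDerivLogAlongLine a 1 (H (ℓ t)) (deriv H (ℓ t)) (deriv (deriv H) (ℓ t)) c := by
  have hGℓ :=
    hasSecondDerivAt_log_add_mul_sq_norm_comp (a := 1) (b := 0) hG hℓ (by simpa using hG0)
  have hHℓ := hasSecondDerivAt_log_add_mul_sq_norm_comp hH hℓ hN
  refine (((hGℓ.const_add (Real.log 4)).sub (hHℓ.const_mul 2)).congr_of_eventuallyEq ?_).deriv_deriv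
  have hGcont : ContinuousAt (fun s => G (ℓ s)) t := hG.continuousAt.comp (hℓ t).continuousAt
  have hNcont : ContinuousAt (fun s => 1 + a * ‖H (ℓ s)‖ ^ 2) t :=
    ((hH.continuousAt.comp (hℓ t).continuousAt).norm.pow 2).const_mul a |>.const_add 1
  filter_upwards [hGcont.eventually_ne hG0, hNcont.eventually_ne hN] with s hGs hNs
  rw [Real.log_div (by positivity) (by positivity), Real.log_mul (by norm_num) (by positivity)]
  simp only [zero_add, one_mul, Real.log_pow]
  ring

theorem hasDerivAt_ofReal_add_mul_I (y s : ℝ) : HasDerivAt (fun t : ℝ => (t : ℂ) + y * I) 1 s :=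
  (hasDerivAt_id s).ofReal_comp.add_const _

theorem hasDerivAt_add_ofReal_mul_I (x s : ℝ) :
    HasDerivAt (fun t : ℝ => (x : ℂ) + t * I) I s := by
  simpa using ((hasDerivAt_id s).ofReal_comp.mul_const I).const_add (x : ℂ)

/-- for `F` holomorphic on `Ω` with nonvanishing derivative `F′` and with
`1 + a|F|² > 0` on `Ω`, the function `f(x,y) = log( 4|F′(x+iy)|² / (1 + a|F(x+iy)|²)² )`
satisfies the Liouville equation `f_xx + f_yy + 2a·e^f = 0` on `{(x,y) : x+iy ∈ Ω}`. -/
theorem liouville_solution_from_holomorphic_data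
    (a : ℝ) (Ω : Set ℂ) (hΩ : IsOpen Ω)
    (F F' : ℂ → ℂ)
    (hF : ∀ ζ ∈ Ω, HasDerivAt F (F' ζ) ζ)
    (hF' : ∀ ζ ∈ Ω, F' ζ ≠ 0)
    (hpos : ∀ ζ ∈ Ω, 0 < 1 + a * (‖F ζ‖)^2)
    (f : ℝ → ℝ → ℝ)
    (hf : ∀ x y : ℝ,
      f x y = Real.log (4 * (‖F' (x + y * Complex.I)‖)^2 /
        (1 + a * (‖F (x + y * Complex.I)‖)^2)^2)) :
    ∀ x y : ℝ, (x + y * Complex.I) ∈ Ω →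
      pdx2 (pdx2 f) x y + pdy2 (pdy2 f) x y + 2 * a * Real.exp (f x y) = 0 := by
  intro x y hxy
  have hΩxy : Ω ∈ 𝓝 ((x : ℂ) + y * I) := hΩ.mem_nhds hxy
  have hFan : AnalyticAt ℂ F (x + y * I) :=
    DifferentiableOn.analyticAt (fun z hz => (hF z hz).differentiableAt.differentiableWithinAt) hΩxy
  have hF'an : AnalyticAt ℂ F' (x + y * I) :=
    hFan.deriv.congr (eventually_of_mem hΩxy fun z hz => (hF z hz).deriv)
  have hF'0 := hF' _ hxy
  have hN := (hpos _ hxy).ne'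
  have hxx := deriv_deriv_log_density_comp (ℓ := fun s => s + y * I) (t := x) hF'an hFan
    (hasDerivAt_ofReal_add_mul_I y) hF'0 hN
  have hyy := deriv_deriv_log_density_comp (ℓ := fun s => x + s * I) (t := y) hF'an hFan
    (hasDerivAt_add_ofReal_mul_I x) hF'0 hN
  simp only [← hf] at hxx hyy
  change deriv (deriv fun s => f s y) x + deriv (deriv fun s => f x s) y + _ = 0
  have hexp : Real.exp (f x y) = 4 * ‖F' (x + y * I)‖ ^ 2 / (1 + a * ‖F (x + y * I)‖ ^ 2) ^ 2 := by
    rw [hf, Real.exp_log]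
    positivity
  rw [← (hF _ hxy).deriv] at hxx hyy hexp
  rw [hxx, hyy, hexp]
  linear_combination secondDerivLogAlongLine_one_add_I 1 0 (deriv F (x + y * I))
      (deriv F' (x + y * I)) (deriv (deriv F') (x + y * I))
    - 2 * secondDerivLogAlongLine_one_add_I a 1 (F (x + y * I)) (deriv F (x + y * I))
      (deriv (deriv F) (x + y * I))
end

section
/- Let Ω ⊆ ℂ be open, a ≠ 0 and C real constants, and h, ψ holomorphic functions on Ω. Set b = a·(h + h̄) = 2a·Re h and c = C·e^{2 Re ψ} as functions of (x,y), x+iy ∈ Ω. Then the equation a(c_xx + c_yy) + b(b_xx + b_yy) = b_x² + b_y² holds on Ω if and only if a·C·|ψ′|²·|e^ψ|² = a²·|h′|² on Ω. In particular, if h′ is not identically zero then C/a is positive on a nonempty open set and hence C/a ≥ 0. -/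
/-! Both `b = 2a·Re h` and `c = C·e^{2 Re ψ}` have the form `φ (Re f)` with `f` holomorphic.
Since `Re f` is harmonic and, by Cauchy–Riemann, `|∇ Re f| = |f'|`, such a function satisfies
`Δ (φ ∘ Re f) = φ''(Re f)·|f'|²` and `|∇ (φ ∘ Re f)|² = φ'(Re f)²·|f'|²`. Hence `Δb = 0`,
`|∇b|² = 4a²|h'|²` and `Δc = 4C e^{2 Re ψ}|ψ'|²`, so the two sides of equation (two) differ by
`4 (aC|ψ'|²e^{2 Re ψ} - a²|h'|²)`. At a point where `h' ≠ 0` the right side `a²|h'|²` is positive,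
which forces `aC > 0`. -/

open Complex Filter Topology

lemma HasDerivAt.complex_re {g : ℝ → ℂ} {g' : ℂ} {x : ℝ} (hg : HasDerivAt g g' x) :
    HasDerivAt (fun t => (g t).re) g'.re x :=
  reCLM.hasFDerivAt.comp_hasDerivAt x hg

lemma HasDerivAt.complex_im {g : ℝ → ℂ} {g' : ℂ} {x : ℝ} (hg : HasDerivAt g g' x) :
    HasDerivAt (fun t => (g t).im) g'.im x :=
  imCLM.hasFDerivAt.comp_hasDerivAt x hg

section Lines

variable {Ω : Set ℂ} {f : ℂ → ℂ} {x y : ℝ}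

lemma hasDerivAt_horizontal (hf : DifferentiableAt ℂ f (x + y * I)) :
    HasDerivAt (fun t : ℝ => f (t + y * I)) (deriv f (x + y * I)) x :=
  (hf.hasDerivAt.comp_add_const (x : ℂ) (y * I)).comp_ofReal

lemma hasDerivAt_vertical (hf : DifferentiableAt ℂ f (x + y * I)) :
    HasDerivAt (fun t : ℝ => f (x + t * I)) (deriv f (x + y * I) * I) y := by
  have hline : HasDerivAt (fun w : ℂ => x + w * I) I y := by
    simpa using ((hasDerivAt_id (y : ℂ)).mul_const I).const_add (x : ℂ)
  exact (hf.hasDerivAt.comp (y : ℂ) hline).comp_ofReal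

lemma eventually_horizontal_mem (hΩ : IsOpen Ω) (hz : (x : ℂ) + y * I ∈ Ω) :
    ∀ᶠ t : ℝ in 𝓝 x, (t : ℂ) + y * I ∈ Ω :=
  (by fun_prop : Continuous fun t : ℝ => (t : ℂ) + y * I).continuousAt.preimage_mem_nhds
    (hΩ.mem_nhds hz)

lemma eventually_vertical_mem (hΩ : IsOpen Ω) (hz : (x : ℂ) + y * I ∈ Ω) :
    ∀ᶠ t : ℝ in 𝓝 y, (x : ℂ) + t * I ∈ Ω :=
  (by fun_prop : Continuous fun t : ℝ => (x : ℂ) + t * I).continuousAt.preimage_mem_nhds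
    (hΩ.mem_nhds hz)

end Lines

section CompRe

variable {Ω : Set ℂ} {f : ℂ → ℂ} {φ φ' φ'' : ℝ → ℝ} {x y : ℝ}

lemma hasDerivAt_comp_re_horizontal (hφ : ∀ s, HasDerivAt φ (φ' s) s)
    (hf : DifferentiableAt ℂ f (x + y * I)) :
    HasDerivAt (fun t : ℝ => φ (f (t + y * I)).re)
      (φ' (f (x + y * I)).re * (deriv f (x + y * I)).re) x :=
  (hφ _).comp x (hasDerivAt_horizontal hf).complex_re

lemma hasDerivAt_comp_re_vertical (hφ : ∀ s, HasDerivAt φ (φ' s) s)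
    (hf : DifferentiableAt ℂ f (x + y * I)) :
    HasDerivAt (fun t : ℝ => φ (f (x + t * I)).re)
      (φ' (f (x + y * I)).re * -(deriv f (x + y * I)).im) y := by
  simpa [Function.comp_def, mul_neg] using (hφ _).comp y (hasDerivAt_vertical hf).complex_re

lemma pdx2_comp_re (hφ : ∀ s, HasDerivAt φ (φ' s) s) (hf : DifferentiableAt ℂ f (x + y * I)) :
    pdx2 (fun x y => φ (f (x + y * I)).re) x y =
      φ' (f (x + y * I)).re * (deriv f (x + y * I)).re :=
  (hasDerivAt_comp_re_horizontal hφ hf).deriv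

lemma pdy2_comp_re (hφ : ∀ s, HasDerivAt φ (φ' s) s) (hf : DifferentiableAt ℂ f (x + y * I)) :
    pdy2 (fun x y => φ (f (x + y * I)).re) x y =
      φ' (f (x + y * I)).re * -(deriv f (x + y * I)).im :=
  (hasDerivAt_comp_re_vertical hφ hf).deriv

lemma gradient_sq_comp_re (hφ : ∀ s, HasDerivAt φ (φ' s) s)
    (hf : DifferentiableAt ℂ f (x + y * I)) :
    pdx2 (fun x y => φ (f (x + y * I)).re) x y ^ 2 +
        pdy2 (fun x y => φ (f (x + y * I)).re) x y ^ 2 =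
      φ' (f (x + y * I)).re ^ 2 * ‖deriv f (x + y * I)‖ ^ 2 := by
  rw [pdx2_comp_re hφ hf, pdy2_comp_re hφ hf, Complex.sq_norm, normSq_apply]
  ring

lemma pdx2_pdx2_comp_re (hΩ : IsOpen Ω) (hf : DifferentiableOn ℂ f Ω)
    (hφ : ∀ s, HasDerivAt φ (φ' s) s) (hφ' : ∀ s, HasDerivAt φ' (φ'' s) s)
    (hz : (x : ℂ) + y * I ∈ Ω) :
    pdx2 (pdx2 (fun x y => φ (f (x + y * I)).re)) x y =
      φ'' (f (x + y * I)).re * (deriv f (x + y * I)).re ^ 2 +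
        φ' (f (x + y * I)).re * (deriv (deriv f) (x + y * I)).re := by
  have hdiff : ∀ w ∈ Ω, DifferentiableAt ℂ f w := fun w hw =>
    hf.differentiableAt (hΩ.mem_nhds hw)
  have hf' := (hf.deriv hΩ).differentiableAt (hΩ.mem_nhds hz)
  have hnear : (fun t => pdx2 (fun x y => φ (f (x + y * I)).re) t y) =ᶠ[𝓝 x]
      fun t => φ' (f (t + y * I)).re * (deriv f (t + y * I)).re :=
    (eventually_horizontal_mem hΩ hz).mono fun t ht => pdx2_comp_re hφ (hdiff _ ht)
  have hprod := (hasDerivAt_comp_re_horizontal hφ' (hdiff _ hz)).mul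
    (hasDerivAt_horizontal hf').complex_re
  exact ((hprod.congr_of_eventuallyEq hnear).deriv).trans (by ring)

lemma pdy2_pdy2_comp_re (hΩ : IsOpen Ω) (hf : DifferentiableOn ℂ f Ω)
    (hφ : ∀ s, HasDerivAt φ (φ' s) s) (hφ' : ∀ s, HasDerivAt φ' (φ'' s) s)
    (hz : (x : ℂ) + y * I ∈ Ω) :
    pdy2 (pdy2 (fun x y => φ (f (x + y * I)).re)) x y =
      φ'' (f (x + y * I)).re * (deriv f (x + y * I)).im ^ 2 -
        φ' (f (x + y * I)).re * (deriv (deriv f) (x + y * I)).re := by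
  have hdiff : ∀ w ∈ Ω, DifferentiableAt ℂ f w := fun w hw =>
    hf.differentiableAt (hΩ.mem_nhds hw)
  have hf' := (hf.deriv hΩ).differentiableAt (hΩ.mem_nhds hz)
  have hnear : (fun t => pdy2 (fun x y => φ (f (x + y * I)).re) x t) =ᶠ[𝓝 y]
      fun t => φ' (f (x + t * I)).re * -(deriv f (x + t * I)).im :=
    (eventually_vertical_mem hΩ hz).mono fun t ht => pdy2_comp_re hφ (hdiff _ ht)
  have hprod := (hasDerivAt_comp_re_vertical hφ' (hdiff _ hz)).mul
    (hasDerivAt_vertical hf').complex_im.neg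
  exact ((hprod.congr_of_eventuallyEq hnear).deriv).trans (by
    simp only [mul_neg, Pi.neg_apply, neg_mul, neg_neg, mul_im, I_im, mul_one, I_re, mul_zero,
      add_zero]
    ring)

lemma laplacian_comp_re (hΩ : IsOpen Ω) (hf : DifferentiableOn ℂ f Ω)
    (hφ : ∀ s, HasDerivAt φ (φ' s) s) (hφ' : ∀ s, HasDerivAt φ' (φ'' s) s)
    (hz : (x : ℂ) + y * I ∈ Ω) :
    pdx2 (pdx2 (fun x y => φ (f (x + y * I)).re)) x y +
        pdy2 (pdy2 (fun x y => φ (f (x + y * I)).re)) x y =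
      φ'' (f (x + y * I)).re * ‖deriv f (x + y * I)‖ ^ 2 := by
  rw [pdx2_pdx2_comp_re hΩ hf hφ hφ' hz, pdy2_pdy2_comp_re hΩ hf hφ hφ' hz, Complex.sq_norm,
    normSq_apply]
  ring

end CompRe

lemma forall_add_mul_I_mem_iff {Ω : Set ℂ} {P : ℂ → Prop} :
    (∀ x y : ℝ, (x : ℂ) + y * I ∈ Ω → P (x + y * I)) ↔ ∀ ζ ∈ Ω, P ζ :=
  ⟨fun h ζ hζ => by simpa only [re_add_im] using h ζ.re ζ.im (by rwa [re_add_im]),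
    fun h x y hz => h _ hz⟩

lemma div_nonneg_of_mul_mul_eq_sq_mul {a C p q : ℝ} (hp : 0 ≤ p) (hq : 0 < q)
    (h : a * C * p = a ^ 2 * q) : 0 ≤ C / a := by
  rcases eq_or_ne a 0 with rfl | ha
  · simp
  have haC : 0 < a * C := pos_of_mul_pos_left (h ▸ by positivity) hp
  calc 0 ≤ a * C / a ^ 2 := by positivity
    _ = C / a := by field_simp

lemma equation_two_residual {Ω : Set ℂ} (hΩ : IsOpen Ω) {a C : ℝ} {h ψ : ℂ → ℂ}
    (hh : DifferentiableOn ℂ h Ω) (hψ : DifferentiableOn ℂ ψ Ω) {b c : ℝ → ℝ → ℝ}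
    (hb : ∀ x y : ℝ, b x y = 2 * a * (h (x + y * I)).re)
    (hc : ∀ x y : ℝ, c x y = C * Real.exp (2 * (ψ (x + y * I)).re))
    {x y : ℝ} (hz : (x : ℂ) + y * I ∈ Ω) :
    a * (pdx2 (pdx2 c) x y + pdy2 (pdy2 c) x y) +
        b x y * (pdx2 (pdx2 b) x y + pdy2 (pdy2 b) x y) - (pdx2 b x y ^ 2 + pdy2 b x y ^ 2) =
      4 * (a * C * ‖deriv ψ (x + y * I)‖ ^ 2 * Real.exp (2 * (ψ (x + y * I)).re) -
        a ^ 2 * ‖deriv h (x + y * I)‖ ^ 2) := by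
  obtain rfl : b = fun x y : ℝ => 2 * a * (h (x + y * I)).re := funext₂ hb
  obtain rfl : c = fun x y : ℝ => C * Real.exp (2 * (ψ (x + y * I)).re) := funext₂ hc
  have hexp : ∀ k s : ℝ, HasDerivAt (fun s => k * Real.exp (2 * s)) (2 * k * Real.exp (2 * s)) s :=
    fun k s => (((hasDerivAt_id' s).const_mul 2).exp.const_mul k).congr_deriv (by ring)
  have hlin : ∀ s, HasDerivAt (fun s => 2 * a * s) (2 * a) s := fun _ => hasDerivAt_const_mul _
  have hΔb := laplacian_comp_re hΩ hh hlin (fun _ => hasDerivAt_const _ (2 * a)) hz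
  have hgradb := gradient_sq_comp_re hlin (hh.differentiableAt (hΩ.mem_nhds hz))
  have hΔc := laplacian_comp_re hΩ hψ (hexp C) (hexp (2 * C)) hz
  rw [hΔb, hgradb, hΔc]
  ring

theorem equation_two_characterization_general
    (Ω : Set ℂ) (hΩ : IsOpen Ω) (a C : ℝ)
    (h ψ : ℂ → ℂ)
    (hh : DifferentiableOn ℂ h Ω) (hψ : DifferentiableOn ℂ ψ Ω)
    (b c : ℝ → ℝ → ℝ)
    (hb : ∀ x y : ℝ, b x y = 2 * a * (h (x + y * Complex.I)).re)
    (hc : ∀ x y : ℝ, c x y = C * Real.exp (2 * (ψ (x + y * Complex.I)).re)) :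
    ((∀ x y : ℝ, (x + y * Complex.I) ∈ Ω →
        a * (pdx2 (pdx2 c) x y + pdy2 (pdy2 c) x y) +
          b x y * (pdx2 (pdx2 b) x y + pdy2 (pdy2 b) x y)
        = (pdx2 b x y)^2 + (pdy2 b x y)^2)
      ↔ (∀ ζ ∈ Ω, a * C * ‖deriv ψ ζ‖^2 * Real.exp (2 * (ψ ζ).re)
          = a^2 * ‖deriv h ζ‖^2)) ∧
    ((∀ x y : ℝ, (x + y * Complex.I) ∈ Ω →
        a * (pdx2 (pdx2 c) x y + pdy2 (pdy2 c) x y) +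
          b x y * (pdx2 (pdx2 b) x y + pdy2 (pdy2 b) x y)
        = (pdx2 b x y)^2 + (pdy2 b x y)^2) →
      (∃ ζ ∈ Ω, deriv h ζ ≠ 0) → 0 ≤ C / a) := by
  refine (fun hiff => ⟨hiff, fun hpde ⟨ζ, hζ, hne⟩ => ?_⟩) ?_
  · refine (forall₃_congr fun x y hz => ?_).trans forall_add_mul_I_mem_iff
    have hres := equation_two_residual hΩ hh hψ hb hc hz
    constructor <;> intro <;> linarith
  · exact div_nonneg_of_mul_mul_eq_sq_mul (by positivity) (pow_pos (norm_pos_iff.mpr hne) 2)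
      ((mul_assoc _ _ _).symm.trans (hiff.mp hpde ζ hζ))

/-- with `b = a(h + h̄) = 2a·Re h` and `c = C·|e^ψ|² = C·e^{2Reψ}`
(`h, ψ` holomorphic on open `Ω ⊆ ℂ`, `a ≠ 0`), equation (two),
`a(c_xx + c_yy) + b(b_xx + b_yy) = b_x² + b_y²`, holds on `Ω` iff
`a·C·|ψ′|²·|e^ψ|² = a²·|h′|²` on `Ω`; and if it holds and `h′` is not identically zero
then `C/a ≥ 0`. -/
theorem equation_two_characterization
    (Ω : Set ℂ) (hΩ : IsOpen Ω) (a C : ℝ) (ha : a ≠ 0)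
    (h ψ : ℂ → ℂ)
    (hh : DifferentiableOn ℂ h Ω) (hψ : DifferentiableOn ℂ ψ Ω)
    (b c : ℝ → ℝ → ℝ)
    (hb : ∀ x y : ℝ, b x y = 2 * a * (h (x + y * Complex.I)).re)
    (hc : ∀ x y : ℝ, c x y = C * Real.exp (2 * (ψ (x + y * Complex.I)).re)) :
    ((∀ x y : ℝ, (x + y * Complex.I) ∈ Ω →
        a * (pdx2 (pdx2 c) x y + pdy2 (pdy2 c) x y) +
          b x y * (pdx2 (pdx2 b) x y + pdy2 (pdy2 b) x y)
        = (pdx2 b x y)^2 + (pdy2 b x y)^2)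
      ↔ (∀ ζ ∈ Ω, a * C * ‖deriv ψ ζ‖^2 * Real.exp (2 * (ψ ζ).re)
          = a^2 * ‖deriv h ζ‖^2)) ∧
    ((∀ x y : ℝ, (x + y * Complex.I) ∈ Ω →
        a * (pdx2 (pdx2 c) x y + pdy2 (pdy2 c) x y) +
          b x y * (pdx2 (pdx2 b) x y + pdy2 (pdy2 b) x y)
        = (pdx2 b x y)^2 + (pdy2 b x y)^2) →
      (∃ ζ ∈ Ω, deriv h ζ ≠ 0) → 0 ≤ C / a) :=
  equation_two_characterization_general Ω hΩ a C h ψ hh hψ b c hb hc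
end
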